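/- A nontrivial connected graph G is a prism fixer (i.e., γ(G □ K₂) = γ(G)) if and only if G has a symmetric γ-set. -/

import Mathlib

open SimpleGraph

variable {V : Type*}

/-- `A` dominates `B`: every vertex of `B` is in the closed neighborhood of some vertex of `A`. -/
def Dominates (G : SimpleGraph V) (A B : Set V) : Prop :=
  ∀ b ∈ B, ∃ a ∈ A, a = b ∨ G.Adj a b

/-- `D` is a dominating set of `G`. -/
def IsDomSet (G : SimpleGraph V) (D : Set V) : Prop :=
  Dominates G D Set.univ

/-- The domination number of `G`. -/
noncomputable def domNum (G : SimpleGraph V) : ℕ :=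
  sInf {n | ∃ D : Set V, IsDomSet G D ∧ D.ncard = n}

/-- The prism of `G` with respect to a permutation `π`: two disjoint copies of `G`
joined by the perfect matching `u – π u`. -/
def prism (G : SimpleGraph V) (π : Equiv.Perm V) : SimpleGraph (V ⊕ V) :=
  SimpleGraph.fromRel (fun a b =>
    match a, b with
    | Sum.inl u, Sum.inl v => G.Adj u v
    | Sum.inr u, Sum.inr v => G.Adj u v
    | Sum.inl u, Sum.inr v => v = π u
    | Sum.inr _, Sum.inl _ => False)

/-- `G` is a universal fixer. -/
def IsUniversalFixer (G : SimpleGraph V) : Prop :=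
  ∀ π : Equiv.Perm V, domNum (prism G π) = domNum G

/-- `D` is a γ-set (minimum dominating set) of `G`. -/
def IsGammaSet (G : SimpleGraph V) (D : Set V) : Prop :=
  IsDomSet G D ∧ D.ncard = domNum G

/-- `D = [D₁, D₂]` is a symmetric γ-set of `G`. -/
def IsSymGammaSet (G : SimpleGraph V) (D D1 D2 : Set V) : Prop :=
  IsGammaSet G D ∧ D = D1 ∪ D2 ∧ Disjoint D1 D2 ∧ D1.Nonempty ∧ D2.Nonempty ∧
    Dominates G D1 (Set.univ \ D2) ∧ Dominates G D2 (Set.univ \ D1)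

/-- `S` is a 2-packing: closed neighborhoods of distinct vertices of `S` are disjoint. -/
def IsTwoPacking (G : SimpleGraph V) (S : Set V) : Prop :=
  ∀ x ∈ S, ∀ y ∈ S, x ≠ y →
    Disjoint (insert x (G.neighborSet x)) (insert y (G.neighborSet y))

/-- `D` is an even symmetric γ-set of `G`. -/
def IsEvenSymGammaSet (G : SimpleGraph V) (D : Set V) : Prop :=
  ∃ D1 D2, IsSymGammaSet G D D1 D2 ∧ D1.ncard = D2.ncard

/-
A set `D'` of the prism `G □ K₂` splits into its traces `D₁` and `D₂` on the two
copies of `G`. Since the only edge leaving a vertex `v` of one copy goes to its twin in the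
other copy, `D'` dominates the prism exactly when `D₁` dominates `V ∖ D₂` and `D₂` dominates
`V ∖ D₁`, and then `D₁ ∪ D₂` dominates `G`. Hence `γ(G) ≤ γ(G □ K₂)`, with equality precisely
when some such pair has `|D₁| + |D₂| = γ(G)`, i.e. `D₁, D₂` are disjoint and `D₁ ∪ D₂` is a
γ-set. Both parts are nonempty because `γ(G) < |V|` for a nontrivial connected graph.
-/

section Domination

variable {G : SimpleGraph V}

lemma domNum_le_ncard {D : Set V} (hD : IsDomSet G D) : domNum G ≤ D.ncard :=
  Nat.sInf_le ⟨D, hD, rfl⟩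

lemma exists_isGammaSet [Finite V] (G : SimpleGraph V) : ∃ D, IsGammaSet G D := by
  have hne : {n | ∃ D : Set V, IsDomSet G D ∧ D.ncard = n}.Nonempty :=
    ⟨_, Set.univ, fun b _ => ⟨b, trivial, Or.inl rfl⟩, rfl⟩
  obtain ⟨D, hD, hcard⟩ := Nat.sInf_mem hne
  exact ⟨D, hD, hcard⟩

lemma domNum_lt_card_of_adj [Finite V] {u v : V} (huv : G.Adj u v) :
    domNum G < Nat.card V := by
  have hdom : IsDomSet G {u}ᶜ := by
    intro b _
    by_cases hb : b = u
    · exact ⟨v, huv.ne.symm, Or.inr (hb ▸ huv.symm)⟩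
    · exact ⟨b, hb, Or.inl rfl⟩
  calc domNum G ≤ ({u}ᶜ : Set V).ncard := domNum_le_ncard hdom
    _ < Nat.card V := by
      rw [Set.ncard_compl, Set.ncard_singleton]
      have : 0 < Nat.card V := Nat.card_pos_iff.mpr ⟨⟨u⟩, inferInstance⟩
      omega

lemma Dominates.nonempty_of_ncard_lt [Finite V] {A B : Set V} (h : Dominates G A (Set.univ \ B))
    (hB : B.ncard < Nat.card V) : A.Nonempty := by
  obtain ⟨v, hv⟩ := Set.ne_univ_iff_exists_notMem B |>.mp fun hB' => by simp [hB'] at hB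
  obtain ⟨a, ha, -⟩ := h v ⟨trivial, hv⟩
  exact ⟨a, ha⟩

lemma isDomSet_union_of_dominates_compl {D₁ D₂ : Set V} (h : Dominates G D₁ (Set.univ \ D₂)) :
    IsDomSet G (D₁ ∪ D₂) := by
  intro v _
  by_cases hv : v ∈ D₂
  · exact ⟨v, Or.inr hv, Or.inl rfl⟩
  · obtain ⟨a, ha, hav⟩ := h v ⟨trivial, hv⟩
    exact ⟨a, Or.inl ha, hav⟩

lemma isSymGammaSet_of_dominates_compl [Finite V] {D₁ D₂ : Set V}
    (h₁ : Dominates G D₁ (Set.univ \ D₂)) (h₂ : Dominates G D₂ (Set.univ \ D₁))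
    (hcard : D₁.ncard + D₂.ncard = domNum G) (hlt : domNum G < Nat.card V) :
    IsSymGammaSet G (D₁ ∪ D₂) D₁ D₂ := by
  have hdom := isDomSet_union_of_dominates_compl h₁
  have hunion : (D₁ ∪ D₂).ncard = domNum G :=
    le_antisymm (hcard ▸ Set.ncard_union_le D₁ D₂) (domNum_le_ncard hdom)
  have hdisj : Disjoint D₁ D₂ := by
    have hinter := Set.ncard_union_add_ncard_inter D₁ D₂
    rw [Set.disjoint_iff_inter_eq_empty, ← Set.ncard_eq_zero]
    omega
  exact ⟨⟨hdom, hunion⟩, rfl, hdisj, h₁.nonempty_of_ncard_lt (by omega),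
    h₂.nonempty_of_ncard_lt (by omega), h₁, h₂⟩

end Domination

section Prism

variable {G : SimpleGraph V} {π : Equiv.Perm V} {u v : V}

@[simp] lemma prism_adj_inl_inl : (prism G π).Adj (Sum.inl u) (Sum.inl v) ↔ G.Adj u v := by
  simp [prism, G.adj_comm v, and_iff_right_of_imp G.ne_of_adj]

@[simp] lemma prism_adj_inr_inr : (prism G π).Adj (Sum.inr u) (Sum.inr v) ↔ G.Adj u v := by
  simp [prism, G.adj_comm v, and_iff_right_of_imp G.ne_of_adj]

@[simp] lemma prism_adj_inl_inr : (prism G π).Adj (Sum.inl u) (Sum.inr v) ↔ v = π u := by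
  simp [prism]

@[simp] lemma prism_adj_inr_inl : (prism G π).Adj (Sum.inr u) (Sum.inl v) ↔ u = π v := by
  simp [prism]

lemma prism_refl_dominates_inl_iff {D : Set (V ⊕ V)} :
    (∃ a ∈ D, a = Sum.inl v ∨ (prism G (Equiv.refl V)).Adj a (Sum.inl v)) ↔
      v ∈ Sum.inr ⁻¹' D ∨ ∃ a ∈ Sum.inl ⁻¹' D, a = v ∨ G.Adj a v := by
  simp [Sum.exists, or_comm]

lemma prism_refl_dominates_inr_iff {D : Set (V ⊕ V)} :
    (∃ a ∈ D, a = Sum.inr v ∨ (prism G (Equiv.refl V)).Adj a (Sum.inr v)) ↔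
      v ∈ Sum.inl ⁻¹' D ∨ ∃ a ∈ Sum.inr ⁻¹' D, a = v ∨ G.Adj a v := by
  simp [Sum.exists]

lemma isDomSet_prism_refl_iff {D : Set (V ⊕ V)} :
    IsDomSet (prism G (Equiv.refl V)) D ↔
      Dominates G (Sum.inl ⁻¹' D) (Set.univ \ Sum.inr ⁻¹' D) ∧
        Dominates G (Sum.inr ⁻¹' D) (Set.univ \ Sum.inl ⁻¹' D) := by
  simp only [IsDomSet, Dominates, Set.mem_univ, true_implies, Sum.forall,
    prism_refl_dominates_inl_iff, prism_refl_dominates_inr_iff]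
  simp only [Set.mem_sdiff, Set.mem_univ, true_and, or_iff_not_imp_left]

lemma ncard_preimage_inl_add_ncard_preimage_inr [Finite V] (D : Set (V ⊕ V)) :
    (Sum.inl ⁻¹' D).ncard + (Sum.inr ⁻¹' D).ncard = D.ncard := by
  have hrange {f : V → V ⊕ V} (hf : f.Injective) : (f ⁻¹' D).ncard = (D ∩ Set.range f).ncard := by
    rw [← Set.ncard_image_of_injective _ hf, Set.image_preimage_eq_inter_range]
  rw [hrange Sum.inl_injective, hrange Sum.inr_injective, ← Set.ncard_union_eq
      (Set.isCompl_range_inl_range_inr.disjoint.mono Set.inter_subset_right Set.inter_subset_right),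
    ← Set.inter_union_distrib_left, Set.range_inl_union_range_inr, Set.inter_univ]

lemma domNum_le_domNum_prism_refl [Finite V] (G : SimpleGraph V) :
    domNum G ≤ domNum (prism G (Equiv.refl V)) := by
  obtain ⟨D, hD, hcard⟩ := exists_isGammaSet (prism G (Equiv.refl V))
  calc domNum G ≤ (Sum.inl ⁻¹' D ∪ Sum.inr ⁻¹' D).ncard :=
        domNum_le_ncard (isDomSet_union_of_dominates_compl (isDomSet_prism_refl_iff.mp hD).1)
    _ ≤ (Sum.inl ⁻¹' D).ncard + (Sum.inr ⁻¹' D).ncard := Set.ncard_union_le _ _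
    _ = domNum (prism G (Equiv.refl V)) := by rw [ncard_preimage_inl_add_ncard_preimage_inr, hcard]

lemma domNum_prism_refl_le [Finite V] {D₁ D₂ : Set V} (h₁ : Dominates G D₁ (Set.univ \ D₂))
    (h₂ : Dominates G D₂ (Set.univ \ D₁)) :
    domNum (prism G (Equiv.refl V)) ≤ D₁.ncard + D₂.ncard := by
  have hinl : Sum.inl ⁻¹' (Sum.inl '' D₁ ∪ Sum.inr '' D₂) = D₁ := by
    simp [Set.preimage_image_eq D₁ Sum.inl_injective]
  have hinr : Sum.inr ⁻¹' (Sum.inl '' D₁ ∪ Sum.inr '' D₂) = D₂ := by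
    simp [Set.preimage_image_eq D₂ Sum.inr_injective]
  have hD : IsDomSet (prism G (Equiv.refl V)) (Sum.inl '' D₁ ∪ Sum.inr '' D₂) :=
    isDomSet_prism_refl_iff.mpr (by rw [hinl, hinr]; exact ⟨h₁, h₂⟩)
  calc domNum (prism G (Equiv.refl V)) ≤ (Sum.inl '' D₁ ∪ Sum.inr '' D₂).ncard :=
        domNum_le_ncard hD
    _ = D₁.ncard + D₂.ncard := by rw [← ncard_preimage_inl_add_ncard_preimage_inr, hinl, hinr]

end Prism

theorem stmt_8 [Fintype V] (G : SimpleGraph V) (hconn : G.Connected)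
    (hn : 1 < Fintype.card V) :
    domNum (prism G (Equiv.refl V)) = domNum G ↔
      ∃ D D1 D2 : Set V, IsSymGammaSet G D D1 D2 := by
  have hlt : domNum G < Nat.card V := by
    have : Nontrivial V := Fintype.one_lt_card_iff_nontrivial.mp hn
    obtain ⟨v⟩ := hconn.nonempty
    obtain ⟨u, hvu⟩ := hconn.preconnected.exists_adj_of_nontrivial v
    exact domNum_lt_card_of_adj hvu
  constructor
  · intro hfix
    obtain ⟨D, hD, hcard⟩ := exists_isGammaSet (prism G (Equiv.refl V))
    obtain ⟨h₁, h₂⟩ := isDomSet_prism_refl_iff.mp hD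
    refine ⟨_, _, _, isSymGammaSet_of_dominates_compl h₁ h₂ ?_ hlt⟩
    rw [ncard_preimage_inl_add_ncard_preimage_inr, hcard, hfix]
  · rintro ⟨D, D1, D2, ⟨-, hcard⟩, rfl, hdisj, -, -, h₁, h₂⟩
    refine le_antisymm ?_ (domNum_le_domNum_prism_refl G)
    calc domNum (prism G (Equiv.refl V)) ≤ D1.ncard + D2.ncard := domNum_prism_refl_le h₁ h₂
      _ = domNum G := by rw [← hcard, Set.ncard_union_eq hdisj]
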